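/- Given an exact sequence of vector spaces W₁ →^α A →^β B →^γ W₂, a subspace inclusion pair ι_a : A' → A, ι_b : B' → B with an isomorphism β' : A' ≅ B' satisfying β ∘ ι_a = ι_b ∘ β', where ι_a and ι_b are injective, there exist retractions σ_a : A → A' and σ_b : B → B' with σ_a ∘ ι_a = id, σ_b ∘ ι_b = id, σ_b ∘ β = β' ∘ σ_a, and σ_a ∘ α = 0. -/

import Mathlib

/-- Zig-zag splitting lemma: given an exact sequence `W₁ →α A →β B →γ W₂`, injections
`ιa : A' → A`, `ιb : B' → B` and an isomorphism `β' : A' ≃ B'` with `β ∘ ιa = ιb ∘ β'`,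
there are retractions `σa, σb` with `σa ιa = id`, `σb ιb = id`, `σb β = β' σa`, `σa α = 0`. -/
theorem stmt3 (W₁ A B W₂ A' B' : Type*)
    [AddCommGroup W₁] [Module ℚ W₁] [FiniteDimensional ℚ W₁]
    [AddCommGroup A] [Module ℚ A] [FiniteDimensional ℚ A]
    [AddCommGroup B] [Module ℚ B] [FiniteDimensional ℚ B]
    [AddCommGroup W₂] [Module ℚ W₂] [FiniteDimensional ℚ W₂]
    [AddCommGroup A'] [Module ℚ A'] [FiniteDimensional ℚ A']
    [AddCommGroup B'] [Module ℚ B'] [FiniteDimensional ℚ B']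
    (α : W₁ →ₗ[ℚ] A) (β : A →ₗ[ℚ] B) (γ : B →ₗ[ℚ] W₂)
    (hexactA : LinearMap.range α = LinearMap.ker β)
    (hexactB : LinearMap.range β = LinearMap.ker γ)
    (ιa : A' →ₗ[ℚ] A) (ιb : B' →ₗ[ℚ] B)
    (hιa : Function.Injective ιa) (hιb : Function.Injective ιb)
    (β' : A' ≃ₗ[ℚ] B')
    (hcomm : β ∘ₗ ιa = ιb ∘ₗ (β' : A' →ₗ[ℚ] B')) :
    ∃ (σa : A →ₗ[ℚ] A') (σb : B →ₗ[ℚ] B'),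
      σa ∘ₗ ιa = LinearMap.id ∧ σb ∘ₗ ιb = LinearMap.id ∧
      σb ∘ₗ β = (β' : A' →ₗ[ℚ] B') ∘ₗ σa ∧ σa ∘ₗ α = 0 := by
  have hcomm' : ∀ a' : A', β (ιa a') = ιb (β' a') := fun a' =>
    LinearMap.congr_fun hcomm a'
  -- Step 1: ψ : A' × ker β → A, (a', k) ↦ ιa a' + k, is injective.
  set ψ : (A' × LinearMap.ker β) →ₗ[ℚ] A :=
    LinearMap.coprod ιa (LinearMap.ker β).subtype with hψdef
  have hψ : LinearMap.ker ψ = ⊥ := by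
    rw [LinearMap.ker_eq_bot']
    rintro ⟨a', k⟩ h
    simp only [hψdef, LinearMap.coprod_apply, Submodule.subtype_apply] at h
    have hβk : β (k : A) = 0 := k.2
    have h1 : β (ιa a') = 0 := by
      have := congrArg β h
      simp [map_add, hβk] at this
      simpa using this
    have h2 : ιb (β' a') = 0 := by rw [← hcomm']; exact h1
    have h3 : β' a' = 0 := hιb (by simpa using h2)
    have ha' : a' = 0 := by
      have := congrArg β'.symm h3; simpa using this
    have hk : (k : A) = 0 := by
      rw [ha'] at h; simpa using h
    exact Prod.ext ha' (Subtype.ext hk)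
  obtain ⟨g, hg⟩ := ψ.exists_leftInverse_of_injective hψ
  set σa : A →ₗ[ℚ] A' := (LinearMap.fst ℚ A' (LinearMap.ker β)) ∘ₗ g with hσadef
  have hσa_ιa : ∀ a' : A', σa (ιa a') = a' := by
    intro a'
    have : g (ψ (a', 0)) = (a', 0) := LinearMap.congr_fun hg (a', 0)
    simp only [hψdef, LinearMap.coprod_apply, Submodule.subtype_apply,
      Submodule.coe_zero, add_zero] at this
    simp [hσadef, this]
  have hσa_ker : ∀ k : A, β k = 0 → σa k = 0 := by
    intro k hk
    have : g (ψ (0, ⟨k, hk⟩)) = (0, ⟨k, hk⟩) := LinearMap.congr_fun hg _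
    simp only [hψdef, LinearMap.coprod_apply, Submodule.subtype_apply,
      map_zero, zero_add] at this
    simp [hσadef, this]
  -- Step 2: ψb : B' × (β '' ker σa) → B injective.
  set C : Submodule ℚ A := LinearMap.ker σa with hCdef
  set D : Submodule ℚ B := Submodule.map β C with hDdef
  set ψb : (B' × D) →ₗ[ℚ] B := LinearMap.coprod ιb D.subtype with hψbdef
  have hψb : LinearMap.ker ψb = ⊥ := by
    rw [LinearMap.ker_eq_bot']
    rintro ⟨b', d⟩ h
    simp only [hψbdef, LinearMap.coprod_apply, Submodule.subtype_apply] at h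
    obtain ⟨c, hc, hcd⟩ := d.2
    set a' : A' := β'.symm b' with ha'def
    have hb' : ιb b' = β (ιa a') := by
      rw [hcomm' a', ha'def, LinearEquiv.apply_symm_apply]
    have hsum : β (ιa a' + c) = 0 := by
      rw [map_add, ← hb', hcd]; exact h
    have hσsum : σa (ιa a' + c) = 0 := hσa_ker _ hsum
    have ha' : a' = 0 := by
      have : σa (ιa a') + σa c = 0 := by rw [← map_add]; exact hσsum
      rw [hσa_ιa, hc] at this
      simpa using this
    have hb'0 : b' = 0 := by
      have : b' = β' a' := by rw [ha'def, LinearEquiv.apply_symm_apply]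
      rw [this, ha', map_zero]
    have hd0 : (d : B) = 0 := by
      rw [hb'0] at h; simpa using h
    exact Prod.ext hb'0 (Subtype.ext hd0)
  obtain ⟨gb, hgb⟩ := ψb.exists_leftInverse_of_injective hψb
  set σb : B →ₗ[ℚ] B' := (LinearMap.fst ℚ B' D) ∘ₗ gb with hσbdef
  have hσb_ιb : ∀ b' : B', σb (ιb b') = b' := by
    intro b'
    have : gb (ψb (b', 0)) = (b', 0) := LinearMap.congr_fun hgb (b', 0)
    simp only [hψbdef, LinearMap.coprod_apply, Submodule.subtype_apply,
      Submodule.coe_zero, add_zero] at this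
    simp [hσbdef, this]
  have hσb_D : ∀ d : B, d ∈ D → σb d = 0 := by
    intro d hd
    have : gb (ψb (0, ⟨d, hd⟩)) = (0, ⟨d, hd⟩) := LinearMap.congr_fun hgb _
    simp only [hψbdef, LinearMap.coprod_apply, Submodule.subtype_apply,
      map_zero, zero_add] at this
    simp [hσbdef, this]
  refine ⟨σa, σb, ?_, ?_, ?_, ?_⟩
  · ext a'; exact hσa_ιa a'
  · ext b'; exact hσb_ιb b'
  · ext a
    simp only [LinearMap.comp_apply]
    have hc : a - ιa (σa a) ∈ C := by
      simp only [hCdef, LinearMap.mem_ker, map_sub, hσa_ιa, sub_self]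
    have hβa : β a = ιb (β' (σa a)) + β (a - ιa (σa a)) := by
      rw [← hcomm', map_sub]; abel
    rw [hβa, map_add, hσb_ιb, hσb_D _ ⟨a - ιa (σa a), hc, rfl⟩, add_zero]; rfl
  · ext w
    simp only [LinearMap.comp_apply, LinearMap.zero_apply]
    apply hσa_ker
    have : α w ∈ LinearMap.ker β := hexactA ▸ LinearMap.mem_range_self α w
    exact this
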